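/- Let n_1,…,n_d ≥ 3 and r ≥ 1, with 4 | gcd(n_1,…,n_d). The Hamming graph H(n_1,…,n_d,2,…,2) (with r twos), whose adjacency matrix is B = Σ_{i=1}^d I ⊗ ⋯ ⊗ A_{K_{n_i}} ⊗ ⋯ ⊗ I + Σ_{j=1}^r I ⊗ ⋯ ⊗ A_{K_2} ⊗ ⋯ ⊗ I (Cartesian product of complete graphs), admits perfect state transfer at time π/2 from every vertex u = (u_1,…,u_d,u_{d+1},…,u_{d+r}) to u + (0,…,0,1,…,1): specifically exp(-i(π/2)B) = γ · I_{n_1⋯n_d} ⊗ (A_{K_2} ⊗ ⋯ ⊗ A_{K_2}) for some unimodular constant γ ∈ ℂ. -/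

import Mathlib

/-!
The summands of `B` commute, so `exp (c • B)` is the product of the exponentials of the
summands. The adjacency matrix `X` of `K_N` satisfies `(X + 1)² = N (X + 1)`, so `(X + 1) / N` is
idempotent and `exp (c X) = e^{-c} (1 + (e^{cN} - 1) / N • (X + 1))`; at `c = -iπ/2` and `4 ∣ N`
this is the scalar `i`. The factors `A_{K_2}` are involutions, so `exp (c X) = cosh c + sinh c • X`,
which at `c = -iπ/2` is `-i X`. Hence `exp (-i(π/2) B) = i^d (-i)^r • I ⊗ A_{K_2}^{⊗r}`, a
unimodular multiple of the permutation matrix of `u ↦ u + (0,…,0,1,…,1)`.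
-/

open Kronecker

/-- Adjacency matrix of the complete graph `K_n`, as a complex matrix. -/
noncomputable def Kadj (n : ℕ) : Matrix (Fin n) (Fin n) ℂ :=
  Matrix.of fun i j => if i = j then 0 else 1

/-- Adjacency matrix of `K_2`, indexed by `ZMod 2`. -/
noncomputable def A2 : Matrix (ZMod 2) (ZMod 2) ℂ :=
  Matrix.of fun i j => if i = j then 0 else 1

/-- Kronecker product of a family of matrices. -/
noncomputable def kronC {d : ℕ} {n : Fin d → ℕ}
    (M : ∀ i, Matrix (Fin (n i)) (Fin (n i)) ℂ) :
    Matrix (∀ i, Fin (n i)) (∀ i, Fin (n i)) ℂ :=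
  Matrix.of fun u v => ∏ i, M i (u i) (v i)

/-- `M_a = A_{K_2}^{a_1} ⊗ ⋯ ⊗ A_{K_2}^{a_r}` for `a ∈ (ℤ/2)^r`. -/
noncomputable def cube {r : ℕ} (a : Fin r → ZMod 2) :
    Matrix (Fin r → ZMod 2) (Fin r → ZMod 2) ℂ :=
  Matrix.of fun u v => ∏ j, (if a j = 1 then A2 else 1) (u j) (v j)

/-- `A_{K_{n_1}}^{a_1} ⊗ ⋯ ⊗ A_{K_{n_d}}^{a_d}`. -/
noncomputable def compKron {d : ℕ} (n : Fin d → ℕ) (a : Fin d → ZMod 2) :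
    Matrix (∀ i, Fin (n i)) (∀ i, Fin (n i)) ℂ :=
  kronC fun i => if a i = 1 then Kadj (n i) else 1

/-- Hamming weight. -/
def wt {m : ℕ} (a : Fin m → ZMod 2) : ℕ :=
  (Finset.univ.filter fun i => a i = 1).card

open NormedSpace Matrix

section BanachAlgebra

variable {𝔸 : Type*} [NormedRing 𝔸] [NormedAlgebra ℂ 𝔸]

theorem exp_smul_of_isIdempotentElem {P : 𝔸} (hP : IsIdempotentElem P) (c : ℂ) :
    exp (c • P) = 1 + (Complex.exp c - 1) • P := by
  let _ : NormedAlgebra ℚ 𝔸 := NormedAlgebra.restrictScalars ℚ ℂ 𝔸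
  have hPQ : P * (1 - P) = 0 := by rw [mul_sub, mul_one, hP.eq, sub_self]
  have hQP : (1 - P) * P = 0 := by rw [sub_mul, one_mul, hP.eq, sub_self]
  -- `P` and `1 - P` are orthogonal idempotents, so `(a, b) ↦ a • (1 - P) + b • P` is an
  -- algebra map out of `ℂ × ℂ`, where the exponential is computed componentwise.
  let φ : ℂ × ℂ →ₐ[ℂ] 𝔸 := AlgHom.ofLinearMap
    ((LinearMap.fst ℂ ℂ ℂ).smulRight (1 - P) + (LinearMap.snd ℂ ℂ ℂ).smulRight P)
    (by simp) (fun x y => by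
      simp only [LinearMap.add_apply, LinearMap.smulRight_apply, LinearMap.fst_apply,
        LinearMap.snd_apply, Prod.fst_mul, Prod.snd_mul, add_mul, mul_add, smul_mul_smul_comm,
        hP.one_sub.eq, hP.eq, hPQ, hQP, smul_zero, add_zero, zero_add])
  have hφ := map_exp φ (LinearMap.continuous_of_finiteDimensional φ.toLinearMap) (0, c)
  have hexp : exp ((0, c) : ℂ × ℂ) = (1, Complex.exp c) := by
    ext <;> simp [Complex.exp_eq_exp_ℂ]
  have h0 : φ (0, c) = c • P := by
    change (0 : ℂ) • (1 - P) + c • P = c • P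
    rw [zero_smul, zero_add]
  have h1 : φ (1, Complex.exp c) = 1 + (Complex.exp c - 1) • P := by
    change (1 : ℂ) • (1 - P) + Complex.exp c • P = _
    rw [one_smul, sub_smul, one_smul]
    abel
  rw [← h0, ← h1, ← hexp, hφ]

variable [CompleteSpace 𝔸]

theorem exp_smul_of_mul_self_eq {X : 𝔸} {N : ℂ} (hN : N ≠ 0)
    (hX : X * X = (N - 2) • X + (N - 1) • 1) (c : ℂ) :
    exp (c • X) = Complex.exp (-c) • (1 + ((Complex.exp (c * N) - 1) / N) • (X + 1)) := by
  let _ : NormedAlgebra ℚ 𝔸 := NormedAlgebra.restrictScalars ℚ ℂ 𝔸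
  have hP : IsIdempotentElem (N⁻¹ • (X + 1)) := by
    have : (X + 1) * (X + 1) = N • (X + 1) := by
      rw [add_mul, mul_add, mul_add, hX, one_mul, mul_one, mul_one]; module
    rw [IsIdempotentElem, smul_mul_smul_comm, this, smul_smul, inv_mul_cancel_right₀ hN]
  have hsplit : c • X = algebraMap ℂ 𝔸 (-c) + (c * N) • (N⁻¹ • (X + 1)) := by
    rw [Algebra.algebraMap_eq_smul_one, smul_smul, mul_inv_cancel_right₀ hN]; module
  rw [hsplit, NormedSpace.exp_add_of_commute (Algebra.commutes _ _), ← algebraMap_exp_comm,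
    exp_smul_of_isIdempotentElem hP, ← Complex.exp_eq_exp_ℂ, Algebra.algebraMap_eq_smul_one,
    smul_mul_assoc, one_mul, smul_smul, div_eq_mul_inv]

theorem exp_smul_of_mul_self_eq_one {X : 𝔸} (hX : X * X = 1) (c : ℂ) :
    exp (c • X) = Complex.cosh c • 1 + Complex.sinh c • X := by
  rw [exp_smul_of_mul_self_eq two_ne_zero (by rw [hX]; norm_num) c, Complex.cosh, Complex.sinh,
    show c * 2 = c + c by ring, Complex.exp_add]
  have : Complex.exp (-c) * Complex.exp c = 1 := by
    rw [← Complex.exp_add, neg_add_cancel, Complex.exp_zero]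
  match_scalars <;> linear_combination (Complex.exp c / 2) * this

end BanachAlgebra

theorem Matrix.sum_kronecker {ι l m n p R : Type*} [CommSemiring R] (s : Finset ι)
    (A : ι → Matrix l m R) (B : Matrix n p R) : (∑ i ∈ s, A i) ⊗ₖ B = ∑ i ∈ s, A i ⊗ₖ B :=
  LinearMap.map_sum₂ (kroneckerBilinear (R := R) (α := R)) s A B

theorem Matrix.kronecker_sum {ι l m n p R : Type*} [CommSemiring R] (s : Finset ι)
    (A : Matrix l m R) (B : ι → Matrix n p R) : A ⊗ₖ (∑ i ∈ s, B i) = ∑ i ∈ s, A ⊗ₖ B i :=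
  map_sum (kroneckerBilinear (R := R) (α := R) A) B s

section KroneckerSum

variable {m n : Type*} [Fintype m] [DecidableEq m] [Fintype n] [DecidableEq n]

theorem exp_kronecker_one (A : Matrix m m ℂ) :
    exp (A ⊗ₖ (1 : Matrix n n ℂ)) = exp A ⊗ₖ 1 := by
  let φ : Matrix m m ℂ →+* Matrix (m × n) (m × n) ℂ :=
    { toFun := (· ⊗ₖ 1)
      map_one' := one_kronecker_one
      map_mul' := fun A B => by simp only [← mul_kronecker_mul, mul_one]
      map_zero' := zero_kronecker _
      map_add' := fun A B => add_kronecker A B 1 }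
  have hφ : Continuous φ :=
    ((kroneckerBilinear (R := ℂ) (α := ℂ)).flip
      (1 : Matrix n n ℂ)).continuous_of_finiteDimensional
  open scoped Matrix.Norms.Operator in exact (map_exp φ hφ A).symm

theorem exp_one_kronecker (B : Matrix n n ℂ) :
    exp ((1 : Matrix m m ℂ) ⊗ₖ B) = 1 ⊗ₖ exp B := by
  let φ : Matrix n n ℂ →+* Matrix (m × n) (m × n) ℂ :=
    { toFun := ((1 : Matrix m m ℂ) ⊗ₖ ·)
      map_one' := one_kronecker_one
      map_mul' := fun A B => by simp only [← mul_kronecker_mul, mul_one]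
      map_zero' := kronecker_zero _
      map_add' := fun A B => kronecker_add 1 A B }
  have hφ : Continuous φ :=
    (kroneckerBilinear (R := ℂ) (α := ℂ) (1 : Matrix m m ℂ)).continuous_of_finiteDimensional
  open scoped Matrix.Norms.Operator in exact (map_exp φ hφ B).symm

theorem exp_kronecker_one_add_one_kronecker (A : Matrix m m ℂ) (B : Matrix n n ℂ) :
    exp (A ⊗ₖ 1 + 1 ⊗ₖ B) = exp A ⊗ₖ exp B := by
  have hcomm : Commute (A ⊗ₖ (1 : Matrix n n ℂ)) ((1 : Matrix m m ℂ) ⊗ₖ B) := by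
    simp only [Commute, SemiconjBy, ← mul_kronecker_mul, mul_one, one_mul]
  rw [Matrix.exp_add_of_commute _ _ hcomm, exp_kronecker_one, exp_one_kronecker,
    ← mul_kronecker_mul, mul_one, one_mul]

end KroneckerSum

section PiKronecker

variable {ι R : Type*} [Fintype ι] [CommSemiring R] {κ : ι → Type*}

def Matrix.piKron (M : ∀ i, Matrix (κ i) (κ i) R) : Matrix (∀ i, κ i) (∀ i, κ i) R :=
  of fun u v => ∏ i, M i (u i) (v i)

theorem Matrix.piKron_mul [DecidableEq ι] [∀ i, Fintype (κ i)]
    (M N : ∀ i, Matrix (κ i) (κ i) R) : piKron M * piKron N = piKron (M * N) := by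
  ext u v
  simp only [piKron, mul_apply, of_apply, Pi.mul_apply, ← Finset.prod_mul_distrib]
  exact (Fintype.prod_sum fun i w => M i (u i) w * N i w (v i)).symm

theorem Matrix.piKron_one [∀ i, DecidableEq (κ i)] :
    piKron (1 : ∀ i, Matrix (κ i) (κ i) R) = 1 := by
  ext u v
  simp only [piKron, of_apply, Pi.one_apply, one_apply, Fintype.prod_boole, funext_iff]

theorem Matrix.piKron_commute [DecidableEq ι] [∀ i, Fintype (κ i)]
    {M N : ∀ i, Matrix (κ i) (κ i) R} (h : ∀ i, Commute (M i) (N i)) :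
    Commute (piKron M) (piKron N) := by
  rw [Commute, SemiconjBy, piKron_mul, piKron_mul,
    show M * N = N * M from funext fun i => (h i).eq]

theorem Matrix.piKron_ite_mul_self [DecidableEq ι] [∀ i, Fintype (κ i)]
    [∀ i, DecidableEq (κ i)] {M : ∀ i, Matrix (κ i) (κ i) R} {i : ι} {a b : R}
    (h : M i * M i = a • M i + b • 1) :
    piKron (fun k => if k = i then M k else 1) * piKron (fun k => if k = i then M k else 1) =
      a • piKron (fun k => if k = i then M k else 1) + b • 1 := by
  have hsq : ((fun k => if k = i then M k else 1) * fun k => if k = i then M k else 1) =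
      fun k => if k = i then M k * M k else 1 := by
    funext k; simp only [Pi.mul_apply]; split_ifs <;> simp
  rw [piKron_mul, hsq, ← piKron_one]
  ext u v
  have hsplit (N : ∀ k, Matrix (κ k) (κ k) R) : piKron N u v =
      N i (u i) (v i) * ∏ k ∈ Finset.univ.erase i, N k (u k) (v k) :=
    (Finset.mul_prod_erase _ _ (Finset.mem_univ i)).symm
  have hoff (N : ∀ k, Matrix (κ k) (κ k) R) :
      ∏ k ∈ Finset.univ.erase i, (if k = i then N k else 1) (u k) (v k) =
        ∏ k ∈ Finset.univ.erase i, (1 : Matrix (κ k) (κ k) R) (u k) (v k) :=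
    Finset.prod_congr rfl fun k hk => by rw [if_neg (Finset.ne_of_mem_erase hk)]
  simp only [add_apply, smul_apply, smul_eq_mul, hsplit, hoff, if_pos, h, Pi.one_apply]
  ring

end PiKronecker

theorem kronC_eq_piKron {d : ℕ} {n : Fin d → ℕ} (M : ∀ i, Matrix (Fin (n i)) (Fin (n i)) ℂ) :
    kronC M = piKron M :=
  rfl

theorem cube_eq_piKron {r : ℕ} (a : Fin r → ZMod 2) :
    cube a = piKron fun j => if a j = 1 then A2 else 1 :=
  rfl

def completeAdj (V : Type*) [DecidableEq V] : Matrix V V ℂ :=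
  of fun i j => if i = j then 0 else 1

theorem completeAdj_mul_self (V : Type*) [Fintype V] [DecidableEq V] :
    completeAdj V * completeAdj V =
      ((Fintype.card V : ℂ) - 2) • completeAdj V + ((Fintype.card V : ℂ) - 1) • 1 := by
  have hK : completeAdj V = of (fun _ _ => 1) - 1 := by
    ext i j; by_cases h : i = j <;> simp [completeAdj, one_apply, h]
  have hJ : (of fun _ _ => 1 : Matrix V V ℂ) * of (fun _ _ => 1) =
      (Fintype.card V : ℂ) • of fun _ _ => 1 := by
    ext i j; simp [mul_apply]
  rw [hK, sub_mul, mul_sub, mul_sub, hJ, mul_one, one_mul, mul_one]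
  module

theorem Kadj_mul_self (N : ℕ) :
    Kadj N * Kadj N = ((N : ℂ) - 2) • Kadj N + ((N : ℂ) - 1) • 1 := by
  have h := completeAdj_mul_self (Fin N)
  rwa [Fintype.card_fin] at h

theorem A2_mul_self : A2 * A2 = 1 := by
  have h := completeAdj_mul_self (ZMod 2)
  norm_num [ZMod.card] at h
  exact h

theorem cube_mul {r : ℕ} (a b : Fin r → ZMod 2) : cube a * cube b = cube (a + b) := by
  rw [cube_eq_piKron, cube_eq_piKron, cube_eq_piKron, piKron_mul]
  congr 1
  funext j
  simp only [Pi.mul_apply, Pi.add_apply]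
  have hcases : ∀ x : ZMod 2, x = 0 ∨ x = 1 := by decide
  rcases hcases (a j) with ha | ha <;> rcases hcases (b j) with hb | hb <;>
    simp [ha, hb, A2_mul_self, (by decide : (1 : ZMod 2) + 1 = 0)]

theorem cube_zero {r : ℕ} : cube (0 : Fin r → ZMod 2) = 1 := by
  rw [cube_eq_piKron, ← piKron_one]
  congr 1

theorem cube_mul_self {r : ℕ} (a : Fin r → ZMod 2) : cube a * cube a = 1 := by
  rw [cube_mul, show a + a = 0 from funext fun j => CharTwo.add_self_eq_zero (a j), cube_zero]

theorem cube_commute {r : ℕ} (a b : Fin r → ZMod 2) : Commute (cube a) (cube b) := by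
  rw [Commute, SemiconjBy, cube_mul, cube_mul, add_comm]

theorem cube_one_apply_add_one {r : ℕ} (u : Fin r → ZMod 2) :
    cube (fun _ => 1) u (u + fun _ => 1) = 1 := by
  simp [cube, A2]

theorem exp_sum_smul_cube {ι : Type*} {r : ℕ} {c : ℂ} (hc : Complex.cosh c = 0) (s : Finset ι)
    (a : ι → Fin r → ZMod 2) :
    exp (∑ j ∈ s, c • cube (a j)) = Complex.sinh c ^ s.card • cube (∑ j ∈ s, a j) := by
  classical
  induction s using Finset.induction_on with
  | empty => simp [cube_zero]
  | insert j s hj ih =>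
    have hcomm : Commute (c • cube (a j)) (∑ k ∈ s, c • cube (a k)) :=
      Commute.sum_right _ _ _ fun k _ => ((cube_commute (a j) (a k)).smul_left c).smul_right c
    have hexp : exp (c • cube (a j)) = Complex.cosh c • 1 + Complex.sinh c • cube (a j) :=
      open scoped Matrix.Norms.Operator in exp_smul_of_mul_self_eq_one (cube_mul_self _) c
    rw [Finset.sum_insert hj, Matrix.exp_add_of_commute _ _ hcomm, ih, hexp, hc, zero_smul,
      zero_add, smul_mul_smul_comm, cube_mul, Finset.card_insert_of_notMem hj,
      Finset.sum_insert hj, pow_succ']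

theorem exp_smul_sum_kronC_Kadj {d : ℕ} {n : Fin d → ℕ} (hn : ∀ i, n i ≠ 0) {c : ℂ}
    (hc : ∀ i, Complex.exp (c * n i) = 1) :
    exp (∑ i, c • kronC fun k => if k = i then Kadj (n k) else 1) =
      Complex.exp (-c) ^ d • 1 := by
  simp only [kronC_eq_piKron]
  have hcomm (i j : Fin d) : Commute (piKron fun k => if k = i then Kadj (n k) else 1)
      (piKron fun k => if k = j then Kadj (n k) else 1) :=
    piKron_commute fun k => by split_ifs <;> simp
  have hexp (i : Fin d) : exp (c • piKron fun k => if k = i then Kadj (n k) else 1) =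
      Complex.exp (-c) • 1 := by
    have := open scoped Matrix.Norms.Operator in
      exp_smul_of_mul_self_eq (Nat.cast_ne_zero.2 (hn i))
        (piKron_ite_mul_self (M := fun k => Kadj (n k)) (Kadj_mul_self (n i))) c
    refine this.trans ?_
    rw [hc i, sub_self, zero_div, zero_smul, add_zero]
  rw [Matrix.exp_sum_of_commute _ _ fun i _ j _ _ => ((hcomm i j).smul_left c).smul_right c]
  refine (Finset.noncommProd_eq_pow_card _ _ _ _ fun i _ => hexp i).trans ?_
  rw [Finset.card_univ, Fintype.card_fin, smul_pow, one_pow]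

noncomputable def hammingAdj (d r : ℕ) (n : Fin d → ℕ) :
    Matrix ((∀ i, Fin (n i)) × (Fin r → ZMod 2)) ((∀ i, Fin (n i)) × (Fin r → ZMod 2)) ℂ :=
  (∑ i : Fin d, (kronC fun i' => if i' = i then Kadj (n i') else 1) ⊗ₖ
      (1 : Matrix (Fin r → ZMod 2) (Fin r → ZMod 2) ℂ)) +
    ∑ j : Fin r, (1 : Matrix (∀ i, Fin (n i)) (∀ i, Fin (n i)) ℂ) ⊗ₖ
      cube (fun j' => if j' = j then 1 else 0)

theorem exp_smul_hammingAdj {d r : ℕ} {n : Fin d → ℕ} (hn : ∀ i, n i ≠ 0) {c : ℂ}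
    (hc : ∀ i, Complex.exp (c * n i) = 1) (hcosh : Complex.cosh c = 0) :
    exp (c • hammingAdj d r n) = (Complex.exp (-c) ^ d * Complex.sinh c ^ r) •
      ((1 : Matrix (∀ i, Fin (n i)) (∀ i, Fin (n i)) ℂ) ⊗ₖ cube (fun _ => 1)) := by
  have hB : c • hammingAdj d r n =
      (∑ i, c • kronC fun i' => if i' = i then Kadj (n i') else 1) ⊗ₖ 1 +
        1 ⊗ₖ ∑ j : Fin r, c • cube (fun j' => if j' = j then 1 else 0) := by
    simp only [hammingAdj, sum_kronecker, kronecker_sum, smul_add, Finset.smul_sum,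
      smul_kronecker, kronecker_smul]
  have hsum : (∑ j : Fin r, fun j' => if j' = j then (1 : ZMod 2) else 0) = fun _ => 1 := by
    funext j'
    simp [Finset.sum_apply]
  rw [hB, exp_kronecker_one_add_one_kronecker, exp_smul_sum_kronC_Kadj hn hc,
    exp_sum_smul_cube hcosh, hsum, Finset.card_univ, Fintype.card_fin, smul_kronecker,
    kronecker_smul, smul_smul]

theorem Complex.cosh_neg_I_mul_pi_div_two :
    Complex.cosh (-Complex.I * ((Real.pi / 2 : ℝ) : ℂ)) = 0 := by
  rw [neg_mul, Complex.cosh_neg, mul_comm, Complex.cosh_mul_I, Complex.ofReal_div]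
  push_cast
  exact Complex.cos_pi_div_two

theorem Complex.sinh_neg_I_mul_pi_div_two :
    Complex.sinh (-Complex.I * ((Real.pi / 2 : ℝ) : ℂ)) = -Complex.I := by
  rw [neg_mul, Complex.sinh_neg, mul_comm, Complex.sinh_mul_I]
  push_cast
  rw [Complex.sin_pi_div_two, one_mul]

theorem Complex.exp_neg_neg_I_mul_pi_div_two :
    Complex.exp (-(-Complex.I * ((Real.pi / 2 : ℝ) : ℂ))) = Complex.I := by
  rw [neg_mul, neg_neg, mul_comm, Complex.exp_mul_I]
  push_cast
  simp [Complex.cos_pi_div_two, Complex.sin_pi_div_two]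

theorem Complex.exp_neg_I_mul_pi_div_two_mul_of_four_dvd {N : ℕ} (hN : 4 ∣ N) :
    Complex.exp (-Complex.I * ((Real.pi / 2 : ℝ) : ℂ) * N) = 1 := by
  obtain ⟨k, rfl⟩ := hN
  convert Complex.exp_int_mul_two_pi_mul_I (-k) using 2
  push_cast
  ring

theorem stmt18_general (d r : ℕ) (hr : 1 ≤ r) (n : Fin d → ℕ) (hn : ∀ i, 3 ≤ n i)
    (h4 : 4 ∣ Finset.univ.gcd n) :
    ∃ γ : ℂ, ‖γ‖ = 1 ∧
      NormedSpace.exp ((-Complex.I * ((Real.pi / 2 : ℝ) : ℂ)) •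
          ((∑ i : Fin d, (kronC fun i' => if i' = i then Kadj (n i') else 1) ⊗ₖ
              (1 : Matrix (Fin r → ZMod 2) (Fin r → ZMod 2) ℂ)) +
           ∑ j : Fin r, (1 : Matrix (∀ i, Fin (n i)) (∀ i, Fin (n i)) ℂ) ⊗ₖ
              cube (fun j' => if j' = j then 1 else 0))) =
        γ • ((1 : Matrix (∀ i, Fin (n i)) (∀ i, Fin (n i)) ℂ) ⊗ₖ
          cube (fun _ => 1)) ∧
      ∀ (x : ∀ i, Fin (n i)) (u : Fin r → ZMod 2),
        (x, u) ≠ (x, u + fun _ => 1) ∧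
        ‖((NormedSpace.exp ((-Complex.I * ((Real.pi / 2 : ℝ) : ℂ)) •
          ((∑ i : Fin d, (kronC fun i' => if i' = i then Kadj (n i') else 1) ⊗ₖ
              (1 : Matrix (Fin r → ZMod 2) (Fin r → ZMod 2) ℂ)) +
           ∑ j : Fin r, (1 : Matrix (∀ i, Fin (n i)) (∀ i, Fin (n i)) ℂ) ⊗ₖ
              cube (fun j' => if j' = j then 1 else 0))))
          (x, u) (x, u + fun _ => 1))‖ = 1 := by
  have hexp := exp_smul_hammingAdj (r := r) (n := n) (fun i => by have := hn i; omega)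
    (fun i => Complex.exp_neg_I_mul_pi_div_two_mul_of_four_dvd
      (h4.trans (Finset.gcd_dvd (Finset.mem_univ i))))
    Complex.cosh_neg_I_mul_pi_div_two
  rw [Complex.exp_neg_neg_I_mul_pi_div_two, Complex.sinh_neg_I_mul_pi_div_two] at hexp
  unfold hammingAdj at hexp
  refine ⟨_, by simp, hexp, fun x u => ⟨?_, ?_⟩⟩
  · intro h
    simpa using congr_fun (congr_arg Prod.snd h) ⟨0, hr⟩
  · rw [hexp, Matrix.smul_apply, kroneckerMap_apply, one_apply_eq, cube_one_apply_add_one]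
    simp

/-- the Hamming graph `H(n_1,…,n_d,2,…,2)` (with `r` twos and
`4 ∣ gcd(n_1,…,n_d)`) satisfies `exp(-i(π/2)B) = γ·(I ⊗ A_{K_2}^{⊗r})` for some
unimodular `γ`; in particular it admits PST at time `π/2` from every vertex `u` to
`u + (0,…,0,1,…,1)`. -/
theorem stmt18 (d r : ℕ) (hd : 0 < d) (hr : 1 ≤ r) (n : Fin d → ℕ) (hn : ∀ i, 3 ≤ n i)
    (h4 : 4 ∣ Finset.univ.gcd n) :
    ∃ γ : ℂ, ‖γ‖ = 1 ∧
      NormedSpace.exp ((-Complex.I * ((Real.pi / 2 : ℝ) : ℂ)) •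
          ((∑ i : Fin d, (kronC fun i' => if i' = i then Kadj (n i') else 1) ⊗ₖ
              (1 : Matrix (Fin r → ZMod 2) (Fin r → ZMod 2) ℂ)) +
           ∑ j : Fin r, (1 : Matrix (∀ i, Fin (n i)) (∀ i, Fin (n i)) ℂ) ⊗ₖ
              cube (fun j' => if j' = j then 1 else 0))) =
        γ • ((1 : Matrix (∀ i, Fin (n i)) (∀ i, Fin (n i)) ℂ) ⊗ₖ
          cube (fun _ => 1)) ∧
      ∀ (x : ∀ i, Fin (n i)) (u : Fin r → ZMod 2),
        (x, u) ≠ (x, u + fun _ => 1) ∧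
        ‖((NormedSpace.exp ((-Complex.I * ((Real.pi / 2 : ℝ) : ℂ)) •
          ((∑ i : Fin d, (kronC fun i' => if i' = i then Kadj (n i') else 1) ⊗ₖ
              (1 : Matrix (Fin r → ZMod 2) (Fin r → ZMod 2) ℂ)) +
           ∑ j : Fin r, (1 : Matrix (∀ i, Fin (n i)) (∀ i, Fin (n i)) ℂ) ⊗ₖ
              cube (fun j' => if j' = j then 1 else 0))))
          (x, u) (x, u + fun _ => 1))‖ = 1 :=
  stmt18_general d r hr n hn h4
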